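/- Let W = ℝ^m and V = ℝ^n with n < m, and let U : ℝ^m → ℝ^n be given by U = D Q where Q ∈ ℝ^{m×m} is orthogonal and D = (I_n, 0_{n×(m-n)}) is the truncation matrix. Let S = (UᵀU)(ℝ^m) be the range of the projection P = UᵀU. Then for any vectors v, v_1, ..., v_k ∈ S and any λ > 0, we have vᵀ Uᵀ U (∑_{i=1}^k v_i v_iᵀ + λ I_m)^{-1} Uᵀ U v = (Uv)ᵀ (∑_{i=1}^k (U v_i)(U v_i)ᵀ + λ I_n)^{-1} (U v). -/

import Mathlib

/-!
Since `U` has orthonormal rows, `UUᵀU = U` and `P = UᵀU` is a projection, so `P v_i = v_i`.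
Hence `A Uᵀ = Uᵀ B` for the regularized Gram matrices `A = ∑ v_i v_iᵀ + λ I_m` and
`B = ∑ (U v_i)(U v_i)ᵀ + λ I_n`; both are positive definite, so `A⁻¹ Uᵀ = Uᵀ B⁻¹` and
`P A⁻¹ P = UᵀU (A⁻¹ Uᵀ) U = (UᵀUUᵀ) B⁻¹ U = Uᵀ B⁻¹ U`.
-/

open Matrix

section RegGram

variable {ι m n : Type*} [Fintype ι] [Fintype m] [Fintype n] [DecidableEq m] [DecidableEq n]

def regGram (vs : ι → n → ℝ) (lam : ℝ) : Matrix n n ℝ :=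
  ∑ i, vecMulVec (vs i) (vs i) + lam • 1

theorem regGram_posDef (vs : ι → n → ℝ) {lam : ℝ} (hlam : 0 < lam) :
    (regGram vs lam).PosDef :=
  PosDef.posSemidef_add
    (posSemidef_sum _ fun i _ => by simpa using posSemidef_vecMulVec_self_star (vs i))
    (PosDef.one.smul hlam)

theorem inv_mul_eq_mul_inv_of_mul_eq_mul {α : Type*} [CommRing α] {A : Matrix m m α}
    {B : Matrix n n α} {X : Matrix m n α} (hA : IsUnit A) (hB : IsUnit B)
    (h : A * X = X * B) : A⁻¹ * X = X * B⁻¹ := by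
  calc A⁻¹ * X = A⁻¹ * X * (B * B⁻¹) := by
        rw [mul_nonsing_inv B ((isUnit_iff_isUnit_det B).mp hB), Matrix.mul_one]
    _ = A⁻¹ * (A * X) * B⁻¹ := by simp only [h, Matrix.mul_assoc]
    _ = X * B⁻¹ := by
        rw [← Matrix.mul_assoc, nonsing_inv_mul A ((isUnit_iff_isUnit_det A).mp hA),
          Matrix.one_mul]

theorem regGram_mul_transpose {U : Matrix m n ℝ} {vs : ι → n → ℝ}
    (hvs : ∀ i, (Uᵀ * U) *ᵥ vs i = vs i) (lam : ℝ) :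
    regGram vs lam * Uᵀ = Uᵀ * regGram (fun i => U *ᵥ vs i) lam := by
  simp only [regGram, Matrix.add_mul, Matrix.mul_add, Matrix.sum_mul, Matrix.mul_sum,
    vecMulVec_mul, mul_vecMulVec, vecMul_transpose, mulVec_mulVec, hvs, Matrix.smul_mul,
    Matrix.mul_smul, Matrix.one_mul, Matrix.mul_one]

theorem transpose_mul_mul_regGram_inv_mul {U : Matrix m n ℝ} (hU : U * Uᵀ * U = U)
    {vs : ι → n → ℝ} (hvs : ∀ i, ∃ w, (Uᵀ * U) *ᵥ w = vs i) {lam : ℝ} (hlam : 0 < lam) :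
    Uᵀ * U * (regGram vs lam)⁻¹ * (Uᵀ * U) = Uᵀ * (regGram (fun i => U *ᵥ vs i) lam)⁻¹ * U := by
  have hUt : Uᵀ * U * Uᵀ = Uᵀ := by simpa [Matrix.mul_assoc] using congrArg transpose hU
  have hP : ∀ i, (Uᵀ * U) *ᵥ vs i = vs i := fun i => by
    obtain ⟨w, hw⟩ := hvs i
    rw [← hw, mulVec_mulVec, ← Matrix.mul_assoc, hUt]
  have hinv := inv_mul_eq_mul_inv_of_mul_eq_mul (regGram_posDef vs hlam).isUnit
    (regGram_posDef _ hlam).isUnit (regGram_mul_transpose hP lam)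
  calc Uᵀ * U * (regGram vs lam)⁻¹ * (Uᵀ * U) = Uᵀ * U * ((regGram vs lam)⁻¹ * Uᵀ) * U := by
        simp only [Matrix.mul_assoc]
    _ = Uᵀ * (regGram (fun i => U *ᵥ vs i) lam)⁻¹ * U := by
        rw [hinv, ← Matrix.mul_assoc, hUt]

end RegGram

theorem truncation_mul_transpose {m n : ℕ} (hnm : n ≤ m) {D : Matrix (Fin n) (Fin m) ℝ}
    (hD : ∀ i j, D i j = if (j : ℕ) = (i : ℕ) then 1 else 0) : D * Dᵀ = 1 := by
  have hD' : D = (1 : Matrix (Fin m) (Fin m) ℝ).submatrix (Fin.castLE hnm) id := by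
    ext i j
    simp [hD, one_apply, Fin.ext_iff, eq_comm]
  rw [hD', transpose_submatrix, transpose_one, ← submatrix_mul _ _ _ _ _ Function.bijective_id,
    Matrix.mul_one, submatrix_one _ (Fin.castLE_injective hnm)]

theorem stmt0_general (m n k : ℕ) (hn : n < m)
    (Q : Matrix (Fin m) (Fin m) ℝ) (hQ : Qᵀ * Q = 1)
    (D : Matrix (Fin n) (Fin m) ℝ)
    (hD : ∀ i j, D i j = if (j : ℕ) = (i : ℕ) then 1 else 0)
    (U : Matrix (Fin n) (Fin m) ℝ) (hU : U = D * Q)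
    (v : Fin m → ℝ) (vs : Fin k → Fin m → ℝ)
    (hvs : ∀ i, ∃ w, (Uᵀ * U).mulVec w = vs i)
    (lam : ℝ) (hlam : 0 < lam) :
    v ⬝ᵥ ((Uᵀ * U) * (∑ i, vecMulVec (vs i) (vs i) + lam • (1 : Matrix (Fin m) (Fin m) ℝ))⁻¹
        * (Uᵀ * U)).mulVec v
      = (U.mulVec v) ⬝ᵥ
        ((∑ i, vecMulVec (U.mulVec (vs i)) (U.mulVec (vs i))
            + lam • (1 : Matrix (Fin n) (Fin n) ℝ))⁻¹).mulVec (U.mulVec v) := by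
  have hUUt : U * Uᵀ = 1 := by
    rw [hU, transpose_mul, Matrix.mul_assoc, ← Matrix.mul_assoc Q, mul_eq_one_comm.mp hQ,
      Matrix.one_mul, truncation_mul_transpose hn.le hD]
  have key := transpose_mul_mul_regGram_inv_mul (by rw [hUUt, Matrix.one_mul]) hvs hlam
  simp only [regGram] at key
  rw [key, ← mulVec_mulVec, ← mulVec_mulVec, dotProduct_mulVec, vecMul_transpose]

/-- Projection trick for quadratic forms: with `U = D * Q` (`Q` orthogonal, `D` the
truncation matrix), `P = Uᵀ * U`, and vectors in the range of `P`, the quadratic form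
of the regularized inverse Gram matrix can be computed in the compressed space. -/
theorem stmt0 (m n k : ℕ) (hn : n < m)
    (Q : Matrix (Fin m) (Fin m) ℝ) (hQ : Qᵀ * Q = 1)
    (D : Matrix (Fin n) (Fin m) ℝ)
    (hD : ∀ i j, D i j = if (j : ℕ) = (i : ℕ) then 1 else 0)
    (U : Matrix (Fin n) (Fin m) ℝ) (hU : U = D * Q)
    (v : Fin m → ℝ) (vs : Fin k → Fin m → ℝ)
    (hv : ∃ w, (Uᵀ * U).mulVec w = v)
    (hvs : ∀ i, ∃ w, (Uᵀ * U).mulVec w = vs i)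
    (lam : ℝ) (hlam : 0 < lam) :
    v ⬝ᵥ ((Uᵀ * U) * (∑ i, vecMulVec (vs i) (vs i) + lam • (1 : Matrix (Fin m) (Fin m) ℝ))⁻¹
        * (Uᵀ * U)).mulVec v
      = (U.mulVec v) ⬝ᵥ
        ((∑ i, vecMulVec (U.mulVec (vs i)) (U.mulVec (vs i))
            + lam • (1 : Matrix (Fin n) (Fin n) ℝ))⁻¹).mulVec (U.mulVec v) :=
  stmt0_general m n k hn Q hQ D hD U hU v vs hvs lam hlam
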